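/- arXiv:2107.11212 — 8 statements merged into one kernel-verified Lean document; each statement's English description precedes it below -/
import Mathlib

section
/- The sum over all permutations σ ∈ S_n of the product ∏_{i=1}^n l_i(σ) of the entries of the left inversion vector equals (n+1)! · n! / 2^n. -/
open Finset

/-- The `i`-th entry of the left inversion vector: `l_i(σ) = #{j ≤ i : σ(j) ≥ σ(i)}`. -/
def linv {n : ℕ} (σ : Equiv.Perm (Fin n)) (i : Fin n) : ℕ :=
  (Finset.univ.filter (fun j : Fin n => j ≤ i ∧ σ i ≤ σ j)).card

/-- The tree realization number `R(σ) = ∏ᵢ l_i(σ)`. -/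
def TRN {n : ℕ} (σ : Equiv.Perm (Fin n)) : ℕ := ∏ i, linv σ i

/-- Build a permutation of `Fin (n+1)` from its last value `v` and the induced
permutation on the first `n` positions. -/
def permSnoc {n : ℕ} (v : Fin (n + 1)) (e : Equiv.Perm (Fin n)) : Equiv.Perm (Fin (n + 1)) :=
  (finSuccEquivLast.trans e.optionCongr).trans (finSuccEquiv' v).symm

lemma permSnoc_last {n : ℕ} (v : Fin (n + 1)) (e : Equiv.Perm (Fin n)) :
    permSnoc v e (Fin.last n) = v := by
  simp [permSnoc]

lemma permSnoc_castSucc {n : ℕ} (v : Fin (n + 1)) (e : Equiv.Perm (Fin n)) (i : Fin n) :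
    permSnoc v e i.castSucc = v.succAbove (e i) := by
  simp [permSnoc]

lemma permSnoc_bijective {n : ℕ} :
    Function.Bijective (fun p : Fin (n + 1) × Equiv.Perm (Fin n) => permSnoc p.1 p.2) := by
  rw [Fintype.bijective_iff_injective_and_card]
  constructor
  · rintro ⟨v, e⟩ ⟨v', e'⟩ h
    simp only at h
    have hv : v = v' := by
      have := congrArg (fun σ : Equiv.Perm (Fin (n + 1)) => σ (Fin.last n)) h
      simpa [permSnoc_last] using this
    have he : e = e' := by
      apply Equiv.ext
      intro i
      apply Fin.succAbove_right_injective (p := v')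
      have h2 := congrArg (fun σ : Equiv.Perm (Fin (n + 1)) => σ i.castSucc) h
      simp only [permSnoc_castSucc] at h2
      rw [hv] at h2
      exact h2
    exact Prod.ext hv he
  · simp [Fintype.card_perm, Nat.factorial]

lemma linv_permSnoc_last {n : ℕ} (v : Fin (n + 1)) (e : Equiv.Perm (Fin n)) :
    linv (permSnoc v e) (Fin.last n) = n + 1 - (v : ℕ) := by
  unfold linv
  have h1 : (univ.filter fun j : Fin (n + 1) =>
      j ≤ Fin.last n ∧ permSnoc v e (Fin.last n) ≤ permSnoc v e j)
      = univ.filter fun j => v ≤ permSnoc v e j := by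
    ext j
    simp [Fin.le_last, permSnoc_last]
  rw [h1]
  have h2 : (univ.filter fun j : Fin (n + 1) => v ≤ permSnoc v e j).card
      = (univ.filter fun w : Fin (n + 1) => v ≤ w).card := by
    apply Finset.card_bij (fun j _ => permSnoc v e j)
    · intro a ha; simp only [mem_filter, mem_univ, true_and] at ha ⊢; exact ha
    · intro a _ b _ h; exact (permSnoc v e).injective h
    · intro b hb
      simp only [mem_filter, mem_univ, true_and] at hb ⊢
      exact ⟨(permSnoc v e).symm b, by simpa using hb, by simp⟩
  rw [h2]
  have h3 : (univ.filter fun w : Fin (n + 1) => v ≤ w) = Finset.Ici v := by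
    ext w; simp
  rw [h3, Fin.card_Ici]

lemma linv_permSnoc_castSucc {n : ℕ} (v : Fin (n + 1)) (e : Equiv.Perm (Fin n)) (i : Fin n) :
    linv (permSnoc v e) i.castSucc = linv e i := by
  unfold linv
  rw [← Finset.card_map ⟨Fin.castSucc, Fin.castSucc_injective n⟩]
  congr 1
  ext j
  simp only [Finset.mem_map, mem_filter, mem_univ, true_and, Function.Embedding.coeFn_mk]
  constructor
  · rintro ⟨hle, hval⟩
    have hjlt : j < Fin.last n := lt_of_le_of_lt hle (Fin.castSucc_lt_last i)
    obtain ⟨j', rfl⟩ := Fin.exists_castSucc_eq.mpr (Fin.ne_last_of_lt hjlt)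
    rw [permSnoc_castSucc, permSnoc_castSucc] at hval
    exact ⟨j', ⟨Fin.castSucc_le_castSucc_iff.mp hle,
      Fin.succAbove_le_succAbove_iff.mp hval⟩, rfl⟩
  · rintro ⟨j', ⟨hle, hval⟩, rfl⟩
    refine ⟨Fin.castSucc_le_castSucc_iff.mpr hle, ?_⟩
    rw [permSnoc_castSucc, permSnoc_castSucc]
    exact Fin.succAbove_le_succAbove_iff.mpr hval

lemma TRN_permSnoc {n : ℕ} (v : Fin (n + 1)) (e : Equiv.Perm (Fin n)) :
    TRN (permSnoc v e) = (n + 1 - (v : ℕ)) * TRN e := by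
  unfold TRN
  rw [Fin.prod_univ_castSucc]
  rw [linv_permSnoc_last, mul_comm]
  congr 1
  exact Finset.prod_congr rfl fun i _ => linv_permSnoc_castSucc v e i

lemma sum_ranks (n : ℕ) : 2 * ∑ v : Fin (n + 1), (n + 1 - (v : ℕ)) = (n + 1) * (n + 2) := by
  have h1 : ∑ v : Fin (n + 1), (n + 1 - (v : ℕ)) = ∑ j ∈ Finset.range (n + 1), (j + 1) := by
    rw [Fin.sum_univ_eq_sum_range (fun k => n + 1 - k) (n + 1),
      ← Finset.sum_range_reflect (fun k => n + 1 - k) (n + 1)]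
    exact Finset.sum_congr rfl fun j hj => by rw [Finset.mem_range] at hj; omega
  have g : (∑ i ∈ Finset.range (n + 1), i) * 2 = (n + 1) * n := by
    rw [Finset.sum_range_id_mul_two]; simp
  rw [h1, Finset.sum_add_distrib, Finset.sum_const, card_range, smul_eq_mul, mul_one]
  calc 2 * ((∑ i ∈ Finset.range (n + 1), i) + (n + 1))
      = (∑ i ∈ Finset.range (n + 1), i) * 2 + 2 * (n + 1) := by ring
    _ = (n + 1) * n + 2 * (n + 1) := by rw [g]
    _ = (n + 1) * (n + 2) := by ring

/-- `∑_{σ ∈ S_n} ∏ᵢ l_i(σ) = (n+1)! n! / 2^n`, stated multiplicatively in `ℕ`. -/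
theorem stmt_2 (n : ℕ) :
    2 ^ n * ∑ σ : Equiv.Perm (Fin n), TRN σ =
      Nat.factorial (n + 1) * Nat.factorial n := by
  induction n with
  | zero => simp [TRN, Nat.factorial]
  | succ n ih =>
    have hsum : ∑ σ : Equiv.Perm (Fin (n + 1)), TRN σ
        = (∑ v : Fin (n + 1), (n + 1 - (v : ℕ))) * ∑ e : Equiv.Perm (Fin n), TRN e := by
      rw [← Fintype.sum_bijective _ permSnoc_bijective _ _ (fun p => rfl)]
      rw [Fintype.sum_prod_type]
      simp only [TRN_permSnoc]
      rw [Finset.sum_mul]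
      exact Finset.sum_congr rfl fun v _ => (Finset.mul_sum _ _ _).symm
    rw [hsum]
    have : 2 ^ (n + 1) * ((∑ v : Fin (n + 1), (n + 1 - (v : ℕ))) *
        ∑ e : Equiv.Perm (Fin n), TRN e)
        = (2 * ∑ v : Fin (n + 1), (n + 1 - (v : ℕ))) *
          (2 ^ n * ∑ e : Equiv.Perm (Fin n), TRN e) := by ring
    rw [this, ih, sum_ranks]
    rw [Nat.factorial_succ (n + 1), Nat.factorial_succ n]
    ring
end

section
/- If S_n carries the uniform probability measure, then the expected value of the tree realization number R(σ) = ∏_{i=1}^n l_i(σ) equals (n+1)!/2^n. -/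
open Finset

/-!
Writing `c_i(σ) = l_i(σ) - 1 ∈ {0, …, i}` (0-indexed `i`), the Lehmer code `σ ↦ c(σ)` is a
bijection from `S_n` onto `∏ᵢ Fin (i + 1)`: it is injective because at the last position `i`
where `σ` and `τ` differ, the one with the smaller value at `i` has the larger `l_i`, and both
sides have `n!` elements. Hence `∑_σ R(σ) = ∏ᵢ (1 + ⋯ + (i + 1)) = ∏ᵢ (i + 1)(i + 2) / 2
= n! (n + 1)! / 2ⁿ`.
-/

open scoped Nat

namespace Equiv.Perm

variable {n : ℕ}

lemma linv_eq_card_values (σ : Perm (Fin n)) (i : Fin n) :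
    linv σ i = #{v | σ i ≤ v ∧ σ.symm v ≤ i} := by
  refine card_bij' (fun j _ => σ j) (fun v _ => σ.symm v) ?_ ?_ ?_ ?_ <;> simp +contextual

lemma one_le_linv (σ : Perm (Fin n)) (i : Fin n) : 1 ≤ linv σ i :=
  card_pos.mpr ⟨i, by simp⟩

lemma linv_le (σ : Perm (Fin n)) (i : Fin n) : linv σ i ≤ i + 1 :=
  (card_le_card fun _ hj => mem_Iic.mpr (mem_filter.mp hj).2.1).trans (Fin.card_Iic i).le

lemma symm_eq_of_forall_lt_eq {σ τ : Perm (Fin n)} {i : Fin n}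
    (h : ∀ j, i < j → σ j = τ j) {v : Fin n} (hv : i < σ.symm v) : τ.symm v = σ.symm v := by
  rw [symm_apply_eq, ← h _ hv, apply_symm_apply]

-- As `σ` and `τ` agree after `i`, `{v | σ⁻¹ v ≤ i} = {v | τ⁻¹ v ≤ i}`; `linv σ i` and `linv τ i`
-- count its elements above `σ i` resp. `τ i`, and `σ i` itself is counted only for `σ`.
lemma linv_lt_linv_of_forall_lt_eq {σ τ : Perm (Fin n)} {i : Fin n}
    (h : ∀ j, i < j → σ j = τ j) (hlt : σ i < τ i) : linv τ i < linv σ i := by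
  have hsymm : ∀ v, τ.symm v ≤ i ↔ σ.symm v ≤ i := fun v => by
    constructor <;> intro hv <;> by_contra hv' <;> push Not at hv'
    · exact hv.not_gt (symm_eq_of_forall_lt_eq h hv' ▸ hv')
    · exact hv.not_gt (symm_eq_of_forall_lt_eq (fun j hj => (h j hj).symm) hv' ▸ hv')
  simp only [linv_eq_card_values, hsymm]
  apply card_lt_card
  rw [ssubset_iff_of_subset fun v hv => by simp at hv ⊢; exact ⟨hlt.le.trans hv.1, hv.2⟩]
  exact ⟨σ i, by simp, by simp [hlt]⟩

lemma linv_injective : Function.Injective (linv : Perm (Fin n) → Fin n → ℕ) := by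
  intro σ τ hστ
  by_contra hne
  obtain ⟨i₀, hi₀⟩ : ∃ i, σ i ≠ τ i := by
    by_contra! h
    exact hne (Equiv.ext h)
  obtain ⟨i, hi, hmax⟩ :=
    (univ.filter fun i => σ i ≠ τ i).exists_max_image id ⟨i₀, by simpa using hi₀⟩
  have hagree : ∀ j, i < j → σ j = τ j := fun j hij => by
    by_contra hj
    exact (hmax j (by simpa using hj)).not_gt hij
  rcases lt_or_gt_of_ne (mem_filter.mp hi).2 with hlt | hlt
  · exact (linv_lt_linv_of_forall_lt_eq hagree hlt).ne (congrFun hστ i).symm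
  · exact (linv_lt_linv_of_forall_lt_eq (fun j hj => (hagree j hj).symm) hlt).ne (congrFun hστ i)

def lehmerCode (σ : Perm (Fin n)) (i : Fin n) : Fin (i + 1) :=
  ⟨linv σ i - 1, by have := linv_le σ i; have := one_le_linv σ i; omega⟩

lemma lehmerCode_add_one (σ : Perm (Fin n)) (i : Fin n) :
    (lehmerCode σ i : ℕ) + 1 = linv σ i :=
  Nat.sub_add_cancel (one_le_linv σ i)

lemma lehmerCode_bijective : Function.Bijective (lehmerCode : Perm (Fin n) → _) := by
  refine (Fintype.bijective_iff_injective_and_card _).mpr ⟨fun σ τ h => linv_injective ?_, ?_⟩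
  · ext i
    rw [← lehmerCode_add_one, ← lehmerCode_add_one, h]
  · simp [Fintype.card_perm, Fin.prod_univ_eq_prod_range (· + 1),
      prod_range_add_one_eq_factorial]

theorem sum_prod_linv {R : Type*} [CommSemiring R] (f : Fin n → ℕ → R) :
    ∑ σ : Perm (Fin n), ∏ i, f i (linv σ i) = ∏ i : Fin n, ∑ k ∈ range (i + 1), f i (k + 1) := by
  simp_rw [← Fin.sum_univ_eq_sum_range (f _ <| · + 1), Fintype.prod_sum]
  refine Fintype.sum_bijective _ lehmerCode_bijective _ _ fun σ => ?_
  simp_rw [lehmerCode_add_one]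

end Equiv.Perm

lemma two_mul_sum_range_add_one (m : ℕ) : 2 * ∑ k ∈ range m, (k + 1) = m * (m + 1) := by
  induction m with
  | zero => simp
  | succ m ih => rw [sum_range_succ, mul_add, ih]; ring

lemma prod_fin_mul_add_two (n : ℕ) : ∏ i : Fin n, ((i + 1 : ℕ) * (i + 2)) = n ! * (n + 1)! := by
  induction n with
  | zero => simp
  | succ n ih =>
    simp only [Fin.prod_univ_castSucc, Fin.val_castSucc, Fin.val_last, ih, Nat.factorial_succ]
    ring

theorem two_pow_mul_sum_TRN (n : ℕ) :
    2 ^ n * ∑ σ : Equiv.Perm (Fin n), TRN σ = n ! * (n + 1)! := by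
  simp only [TRN, Equiv.Perm.sum_prod_linv fun _ k => k, ← prod_fin_mul_add_two]
  rw [← Fin.prod_const, ← prod_mul_distrib]
  exact prod_congr rfl fun i _ => two_mul_sum_range_add_one (i + 1)

/-- Under the uniform measure on `S_n`, the expected tree realization number
is `(n+1)!/2^n`. -/
theorem stmt_3 (n : ℕ) :
    (∑ σ : Equiv.Perm (Fin n), (TRN σ : ℚ)) / (Nat.factorial n : ℚ) =
      (Nat.factorial (n + 1) : ℚ) / 2 ^ n := by
  have h : (2 ^ n * ∑ σ : Equiv.Perm (Fin n), TRN σ : ℚ) = n ! * (n + 1)! :=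
    mod_cast two_pow_mul_sum_TRN n
  push_cast at h
  field_simp
  linear_combination h
end

section
/- The sum over all permutations σ ∈ S_n of the square of the tree realization number, ∑_{σ ∈ S_n} (∏_{i=1}^n l_i(σ))², equals (n+1)! · (2n+1)! / 12^n. -/
open Finset

namespace Stmt4Aux

variable {n : ℕ}

/-- Insert: given `τ : Perm (Fin n)` and `p : Fin (n+1)`, the permutation of `Fin (n+1)`
sending `last ↦ p` and `castSucc i ↦ p.succAbove (τ i)`. -/
def g (x : Equiv.Perm (Fin n) × Fin (n + 1)) : Equiv.Perm (Fin (n + 1)) :=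
  finSuccEquivLast.trans (x.1.optionCongr.trans (finSuccEquiv' x.2).symm)

lemma g_last (τ : Equiv.Perm (Fin n)) (p : Fin (n + 1)) : g (τ, p) (Fin.last n) = p := by
  simp [g, finSuccEquivLast_last, finSuccEquiv'_symm_none]

lemma g_castSucc (τ : Equiv.Perm (Fin n)) (p : Fin (n + 1)) (i : Fin n) :
    g (τ, p) (Fin.castSucc i) = p.succAbove (τ i) := by
  simp [g, finSuccEquivLast_castSucc, finSuccEquiv'_symm_some]

lemma g_bij : Function.Bijective (g (n := n)) := by
  rw [Fintype.bijective_iff_injective_and_card]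
  constructor
  · rintro ⟨τ, p⟩ ⟨τ', p'⟩ h
    have hp : p = p' := by rw [← g_last τ p, ← g_last τ' p', h]
    have hτ : τ = τ' := by
      ext i
      have h2 := congrArg (fun σ : Equiv.Perm (Fin (n + 1)) => σ (Fin.castSucc i)) h
      simp only [g_castSucc, hp] at h2
      exact congrArg Fin.val (Fin.succAbove_right_injective h2)
    simp [hp, hτ]
  · simp [Fintype.card_perm, Nat.factorial_succ, Fintype.card_fin]
    ring

lemma linv_g_last (τ : Equiv.Perm (Fin n)) (p : Fin (n + 1)) :
    linv (g (τ, p)) (Fin.last n) = n + 1 - (p : ℕ) := by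
  unfold linv
  have h1 : (Finset.univ.filter
      (fun j : Fin (n+1) => j ≤ Fin.last n ∧ g (τ, p) (Fin.last n) ≤ g (τ, p) j)).card
      = (Finset.univ.filter (fun v : Fin (n+1) => p ≤ v)).card := by
    apply Finset.card_equiv (g (τ, p))
    intro j
    simp [Fin.le_last, g_last]
  rw [h1, Finset.filter_le_eq_Ici, Fin.card_Ici]

lemma linv_g_castSucc (τ : Equiv.Perm (Fin n)) (p : Fin (n + 1)) (i : Fin n) :
    linv (g (τ, p)) (Fin.castSucc i) = linv τ i := by
  unfold linv
  symm
  apply Finset.card_bij (fun (j : Fin n) _ => Fin.castSucc j)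
  · intro j hj
    simp only [Finset.mem_filter, Finset.mem_univ, true_and] at hj ⊢
    refine ⟨Fin.castSucc_le_castSucc_iff.2 hj.1, ?_⟩
    rw [g_castSucc, g_castSucc]
    exact Fin.succAbove_le_succAbove_iff.2 hj.2
  · intro a _ b _ hab
    exact Fin.castSucc_injective n hab
  · intro j hj
    simp only [Finset.mem_filter, Finset.mem_univ, true_and] at hj
    rcases Fin.eq_castSucc_or_eq_last j with ⟨j', rfl⟩ | rfl
    swap
    · exact absurd hj.1 (Fin.castSucc_lt_last i).not_ge
    refine ⟨j', ?_, rfl⟩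
    simp only [Finset.mem_filter, Finset.mem_univ, true_and]
    rw [g_castSucc, g_castSucc, Fin.castSucc_le_castSucc_iff] at hj
    exact ⟨hj.1, Fin.succAbove_le_succAbove_iff.1 hj.2⟩

lemma TRN_g (τ : Equiv.Perm (Fin n)) (p : Fin (n + 1)) :
    TRN (g (τ, p)) = (n + 1 - (p : ℕ)) * TRN τ := by
  unfold TRN
  rw [Fin.prod_univ_castSucc]
  simp only [linv_g_castSucc, linv_g_last]
  ring

lemma six_mul_sum_sq (m : ℕ) :
    6 * ∑ k ∈ Finset.range m, (k + 1) ^ 2 = m * (m + 1) * (2 * m + 1) := by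
  induction m with
  | zero => simp
  | succ m ih =>
    rw [Finset.sum_range_succ, Nat.mul_add, ih]
    ring

end Stmt4Aux

open Stmt4Aux in
/-- `∑_{σ ∈ S_n} R(σ)² = (n+1)! (2n+1)! / 12^n`, stated multiplicatively in `ℕ`. -/
theorem stmt_4 (n : ℕ) :
    12 ^ n * ∑ σ : Equiv.Perm (Fin n), (TRN σ) ^ 2 =
      Nat.factorial (n + 1) * Nat.factorial (2 * n + 1) := by
  induction n with
  | zero => simp [TRN]
  | succ n ih =>
    rw [← Function.Bijective.sum_comp g_bij (fun σ => TRN σ ^ 2)]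
    have hs : ∑ x : Equiv.Perm (Fin n) × Fin (n + 1), TRN (g x) ^ 2
        = (∑ k ∈ Finset.range (n + 1), (k + 1) ^ 2) * ∑ τ : Equiv.Perm (Fin n), TRN τ ^ 2 := by
      rw [Fintype.sum_prod_type]
      have hp : ∑ p : Fin (n + 1), (n + 1 - (p : ℕ)) ^ 2
          = ∑ k ∈ Finset.range (n + 1), (k + 1) ^ 2 := by
        rw [Fin.sum_univ_eq_sum_range (fun k => (n + 1 - k) ^ 2)]
        rw [← Finset.sum_range_reflect (fun k => (k + 1) ^ 2) (n + 1)]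
        apply Finset.sum_congr rfl
        intro j hj
        simp only [Finset.mem_range] at hj
        congr 1
        omega
      calc ∑ τ : Equiv.Perm (Fin n), ∑ p : Fin (n + 1), TRN (g (τ, p)) ^ 2
          = ∑ τ : Equiv.Perm (Fin n), ∑ p : Fin (n + 1), (n + 1 - (p : ℕ)) ^ 2 * TRN τ ^ 2 := by
            apply Finset.sum_congr rfl; intro τ _
            apply Finset.sum_congr rfl; intro p _
            rw [TRN_g, mul_pow]
        _ = ∑ τ : Equiv.Perm (Fin n), (∑ p : Fin (n + 1), (n + 1 - (p : ℕ)) ^ 2) * TRN τ ^ 2 := by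
            simp [Finset.sum_mul]
        _ = _ := by rw [← Finset.mul_sum, hp]

    rw [hs]
    have h6 := six_mul_sum_sq (n + 1)
    have h2 : 2 * (n + 1) + 1 = (2 * n + 1) + 1 + 1 := by ring
    rw [h2, Nat.factorial_succ ((2 * n + 1) + 1), Nat.factorial_succ (2 * n + 1),
      Nat.factorial_succ (n + 1)]
    calc 12 ^ (n + 1) * ((∑ k ∈ Finset.range (n + 1), (k + 1) ^ 2)
          * ∑ τ : Equiv.Perm (Fin n), TRN τ ^ 2)
        = 2 * (6 * ∑ k ∈ Finset.range (n + 1), (k + 1) ^ 2)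
          * (12 ^ n * ∑ τ : Equiv.Perm (Fin n), TRN τ ^ 2) := by ring
      _ = 2 * ((n + 1) * (n + 2) * (2 * (n + 1) + 1))
          * (Nat.factorial (n + 1) * Nat.factorial (2 * n + 1)) := by rw [h6, ih]
      _ = _ := by ring
end

section
/- Under the uniform distribution on S_n, the second moment of the tree realization number R satisfies E[R²] = (n+1)(2n+1)!/12^n. -/
open Finset

namespace Stmt5Aux

/-- Insert value `v` at the last position: `Φ (v, e)` sends the last index to `v` and
index `castSucc i` to `v.succAbove (e i)`. -/
def Φ {n : ℕ} (p : Fin (n + 1) × Equiv.Perm (Fin n)) : Equiv.Perm (Fin (n + 1)) :=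
  (finSuccEquivLast.trans (Equiv.optionCongr p.2)).trans (finSuccEquiv' p.1).symm

lemma Φ_last {n : ℕ} (v : Fin (n + 1)) (e : Equiv.Perm (Fin n)) :
    Φ (v, e) (Fin.last n) = v := by
  simp [Φ, finSuccEquivLast_last, finSuccEquiv'_symm_none]

lemma Φ_castSucc {n : ℕ} (v : Fin (n + 1)) (e : Equiv.Perm (Fin n)) (i : Fin n) :
    Φ (v, e) (Fin.castSucc i) = v.succAbove (e i) := by
  simp [Φ, finSuccEquivLast_castSucc, finSuccEquiv'_symm_some]

lemma Φ_injective {n : ℕ} : Function.Injective (Φ (n := n)) := by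
  rintro ⟨v, e⟩ ⟨w, f⟩ h
  have hv : v = w := by
    have := congrArg (fun σ : Equiv.Perm (Fin (n + 1)) => σ (Fin.last n)) h
    simpa [Φ_last] using this
  subst hv
  have he : e = f := by
    apply Equiv.ext
    intro i
    have := congrArg (fun σ : Equiv.Perm (Fin (n + 1)) => σ (Fin.castSucc i)) h
    simp only [Φ_castSucc] at this
    exact Fin.succAbove_right_injective this
  rw [he]

lemma Φ_bijective {n : ℕ} : Function.Bijective (Φ (n := n)) := by
  rw [Fintype.bijective_iff_injective_and_card]
  refine ⟨Φ_injective, ?_⟩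
  simp [Fintype.card_perm, Nat.factorial_succ]

lemma linv_Φ_last {n : ℕ} (v : Fin (n + 1)) (e : Equiv.Perm (Fin n)) :
    linv (Φ (v, e)) (Fin.last n) = n + 1 - (v : ℕ) := by
  unfold linv
  have h1 : (univ.filter fun j : Fin (n + 1) =>
      j ≤ Fin.last n ∧ Φ (v, e) (Fin.last n) ≤ Φ (v, e) j)
      = univ.filter fun j : Fin (n + 1) => v ≤ Φ (v, e) j := by
    apply Finset.filter_congr
    intro j _
    simp [Fin.le_last, Φ_last]
  rw [h1]
  have h2 : (univ.filter fun j : Fin (n + 1) => v ≤ Φ (v, e) j).card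
      = (univ.filter fun u : Fin (n + 1) => v ≤ u).card := by
    apply Finset.card_bij (fun j _ => Φ (v, e) j)
    · intro a ha
      simp only [mem_filter, mem_univ, true_and] at ha ⊢
      exact ha
    · intro a _ b _ hab
      exact (Φ (v, e)).injective hab
    · intro b hb
      simp only [mem_filter, mem_univ, true_and] at hb
      exact ⟨(Φ (v, e)).symm b, by simp [hb], by simp⟩
  rw [h2]
  have h3 : (univ.filter fun u : Fin (n + 1) => v ≤ u) = Finset.Ici v := by
    ext u; simp
  rw [h3, Fin.card_Ici]

lemma linv_Φ_castSucc {n : ℕ} (v : Fin (n + 1)) (e : Equiv.Perm (Fin n)) (i : Fin n) :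
    linv (Φ (v, e)) (Fin.castSucc i) = linv e i := by
  unfold linv
  symm
  apply Finset.card_bij (fun j _ => Fin.castSucc j)
  · intro a ha
    simp only [mem_filter, mem_univ, true_and] at ha ⊢
    refine ⟨Fin.castSucc_le_castSucc_iff.mpr ha.1, ?_⟩
    rw [Φ_castSucc, Φ_castSucc]
    exact Fin.succAbove_le_succAbove_iff.mpr ha.2
  · intro a _ b _ hab
    exact Fin.castSucc_injective n hab
  · intro b hb
    simp only [mem_filter, mem_univ, true_and] at hb
    have hblt : b < Fin.last n := lt_of_le_of_lt hb.1 (Fin.castSucc_lt_last i)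
    obtain ⟨b', rfl⟩ := Fin.exists_castSucc_eq.mpr (Fin.ne_last_of_lt hblt)
    refine ⟨b', ?_, rfl⟩
    simp only [mem_filter, mem_univ, true_and]
    refine ⟨Fin.castSucc_le_castSucc_iff.mp hb.1, ?_⟩
    have := hb.2
    rw [Φ_castSucc, Φ_castSucc] at this
    exact Fin.succAbove_le_succAbove_iff.mp this

lemma TRN_Φ {n : ℕ} (v : Fin (n + 1)) (e : Equiv.Perm (Fin n)) :
    TRN (Φ (v, e)) = (n + 1 - (v : ℕ)) * TRN e := by
  unfold TRN
  rw [Fin.prod_univ_castSucc, linv_Φ_last, mul_comm]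
  congr 1
  exact Finset.prod_congr rfl fun i _ => linv_Φ_castSucc v e i

lemma sum_sq_succ (n : ℕ) :
    ∑ σ : Equiv.Perm (Fin (n + 1)), (TRN σ : ℚ) ^ 2
      = (∑ v : Fin (n + 1), ((n + 1 - (v : ℕ) : ℕ) : ℚ) ^ 2)
        * ∑ e : Equiv.Perm (Fin n), (TRN e : ℚ) ^ 2 := by
  rw [← Function.Bijective.sum_comp Φ_bijective (fun σ => (TRN σ : ℚ) ^ 2)]
  rw [Fintype.sum_prod_type]
  rw [Finset.sum_mul]
  apply Finset.sum_congr rfl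
  intro v _
  rw [Finset.mul_sum]
  apply Finset.sum_congr rfl
  intro e _
  rw [TRN_Φ]
  push_cast
  ring

lemma sum_sq_range (m : ℕ) :
    ∑ j ∈ Finset.range m, ((j : ℚ) + 1) ^ 2 = (m : ℚ) * (m + 1) * (2 * m + 1) / 6 := by
  induction m with
  | zero => simp
  | succ m ih =>
    rw [Finset.sum_range_succ, ih]
    push_cast
    ring

lemma sum_sq_fin (m : ℕ) :
    ∑ v : Fin m, ((m - (v : ℕ) : ℕ) : ℚ) ^ 2
      = (m : ℚ) * (m + 1) * (2 * m + 1) / 6 := by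
  rw [Fin.sum_univ_eq_sum_range (fun k => ((m - k : ℕ) : ℚ) ^ 2)]
  rw [← Finset.sum_range_reflect]
  have h : ∀ j ∈ Finset.range m, ((m - (m - 1 - j) : ℕ) : ℚ) ^ 2 = ((j : ℚ) + 1) ^ 2 := by
    intro j hj
    have hjm := Finset.mem_range.mp hj
    have : m - (m - 1 - j) = j + 1 := by omega
    rw [this]
    push_cast
    ring
  rw [Finset.sum_congr rfl h, sum_sq_range]

lemma main (n : ℕ) :
    ∑ σ : Equiv.Perm (Fin n), (TRN σ : ℚ) ^ 2
      = (Nat.factorial (n + 1) : ℚ) * (Nat.factorial (2 * n + 1) : ℚ) / 12 ^ n := by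
  induction n with
  | zero =>
    simp [TRN, Nat.factorial]
  | succ n ih =>
    rw [sum_sq_succ, ih, sum_sq_fin]
    have h1 : Nat.factorial (n + 1 + 1) = (n + 2) * Nat.factorial (n + 1) :=
      Nat.factorial_succ _
    have h2 : Nat.factorial (2 * (n + 1) + 1)
        = (2 * n + 3) * ((2 * n + 2) * Nat.factorial (2 * n + 1)) := by
      have e1 : 2 * (n + 1) + 1 = (2 * n + 2) + 1 := by ring
      rw [e1, Nat.factorial_succ, Nat.factorial_succ]
    rw [h1, h2]
    have h12 : (12 : ℚ) ^ (n + 1) ≠ 0 := by positivity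
    have h12' : (12 : ℚ) ^ n ≠ 0 := by positivity
    push_cast
    field_simp
    ring

end Stmt5Aux

/-- Under the uniform distribution on `S_n`, the second moment of the tree
realization number is `(n+1)(2n+1)!/12^n`. -/
theorem stmt_5 (n : ℕ) :
    (∑ σ : Equiv.Perm (Fin n), (TRN σ : ℚ) ^ 2) / (Nat.factorial n : ℚ) =
      ((n : ℚ) + 1) * (Nat.factorial (2 * n + 1) : ℚ) / 12 ^ n := by
  rw [Stmt5Aux.main]
  have hfac : (Nat.factorial n : ℚ) ≠ 0 := by
    exact_mod_cast Nat.factorial_ne_zero n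
  have h12 : (12 : ℚ) ^ n ≠ 0 := by positivity
  rw [Nat.factorial_succ]
  push_cast
  field_simp
end

section
/- Under the uniform distribution on S_n, the expected value of log R(σ) equals ∑_{i=1}^n log(i!)/i, where R(σ) = ∏_{i=1}^n l_i(σ) is the tree realization number. -/
open Finset

/-- Rank of `σ j` from the top among `σ 0, ..., σ i`. -/
def rnk {n : ℕ} (σ : Equiv.Perm (Fin n)) (i j : Fin n) : ℕ :=
  (Finset.univ.filter (fun j' : Fin n => j' ≤ i ∧ σ j ≤ σ j')).card

lemma linv_eq_rnk {n : ℕ} (σ : Equiv.Perm (Fin n)) (i : Fin n) : linv σ i = rnk σ i i := rfl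

lemma linv_pos {n : ℕ} (σ : Equiv.Perm (Fin n)) (i : Fin n) : 0 < linv σ i :=
  Finset.card_pos.mpr ⟨i, by simp [linv]⟩

lemma swap_le {n : ℕ} {i j k : Fin n} (hj : j ≤ i) (hk : k ≤ i) : Equiv.swap i j k ≤ i := by
  rcases eq_or_ne k i with rfl | hki
  · simpa [Equiv.swap_apply_left] using hj
  rcases eq_or_ne k j with rfl | hkj
  · simp [Equiv.swap_apply_right]
  · rw [Equiv.swap_apply_of_ne_of_ne hki hkj]; exact hk

lemma linv_mul_swap {n : ℕ} (σ : Equiv.Perm (Fin n)) {i j : Fin n} (hj : j ≤ i) :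
    linv (σ * Equiv.swap i j) i = rnk σ i j := by
  unfold linv rnk
  apply Finset.card_bij' (fun j' _ => Equiv.swap i j j') (fun j' _ => Equiv.swap i j j')
  · intro a ha
    simp only [mem_filter, mem_univ, true_and, Equiv.Perm.mul_apply,
      Equiv.swap_apply_left] at ha
    exact Finset.mem_filter.mpr ⟨Finset.mem_univ _, swap_le hj ha.1, ha.2⟩
  · intro a ha
    simp only [mem_filter, mem_univ, true_and] at ha
    refine Finset.mem_filter.mpr ⟨Finset.mem_univ _, swap_le hj ha.1, ?_⟩
    simpa [Equiv.Perm.mul_apply, Equiv.swap_apply_left, Equiv.swap_apply_self] using ha.2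
  · intro a _; simp [Equiv.swap_apply_self]
  · intro a _; simp [Equiv.swap_apply_self]

lemma rnk_strict {n : ℕ} (σ : Equiv.Perm (Fin n)) {i j1 j2 : Fin n}
    (hj1 : j1 ≤ i) (h : σ j1 < σ j2) : rnk σ i j2 < rnk σ i j1 := by
  apply Finset.card_lt_card
  constructor
  · intro x hx
    simp only [mem_filter, mem_univ, true_and] at hx ⊢
    exact ⟨hx.1, le_trans h.le hx.2⟩
  · intro hsub
    have h1 : j1 ∈ Finset.univ.filter (fun j' : Fin n => j' ≤ i ∧ σ j1 ≤ σ j') := by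
      simp [hj1]
    have := hsub h1
    simp only [mem_filter, mem_univ, true_and] at this
    exact absurd this.2 (not_le.mpr h)

lemma rnk_injOn {n : ℕ} (σ : Equiv.Perm (Fin n)) (i : Fin n) :
    Set.InjOn (rnk σ i) (Finset.Iic i) := by
  intro j1 h1 j2 h2 heq
  simp only [Finset.coe_Iic, Set.mem_Iic] at h1 h2
  by_contra hne
  have hσ : σ j1 ≠ σ j2 := fun h => hne (σ.injective h)
  rcases lt_or_gt_of_ne hσ with h | h
  · exact absurd heq (rnk_strict σ h1 h).ne'
  · exact absurd heq (rnk_strict σ h2 h).ne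

lemma rnk_mem {n : ℕ} (σ : Equiv.Perm (Fin n)) {i j : Fin n} (hj : j ≤ i) :
    rnk σ i j ∈ Finset.Icc 1 ((i : ℕ) + 1) := by
  rw [Finset.mem_Icc]
  constructor
  · exact Finset.card_pos.mpr ⟨j, by simp [hj]⟩
  · calc rnk σ i j ≤ (Finset.Iic i).card := by
          apply Finset.card_le_card
          intro x hx
          simp only [mem_filter, mem_univ, true_and] at hx
          exact Finset.mem_Iic.mpr hx.1
      _ = (i : ℕ) + 1 := Fin.card_Iic i

lemma sum_rnk {n : ℕ} (σ : Equiv.Perm (Fin n)) (i : Fin n) (f : ℕ → ℝ) :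
    ∑ j ∈ Finset.Iic i, f (rnk σ i j) = ∑ k ∈ Finset.Icc 1 ((i : ℕ) + 1), f k := by
  rw [← Finset.sum_image (fun x hx y hy h => rnk_injOn σ i (by simpa using hx)
    (by simpa using hy) h)]
  congr 1
  apply Finset.eq_of_subset_of_card_le
  · intro k hk
    obtain ⟨j, hj, rfl⟩ := Finset.mem_image.mp hk
    exact rnk_mem σ (Finset.mem_Iic.mp hj)
  · rw [Finset.card_image_of_injOn (rnk_injOn σ i), Fin.card_Iic, Nat.card_Icc]
    omega

lemma log_factorial_eq (m : ℕ) :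
    Real.log (Nat.factorial m) = ∑ k ∈ Finset.Icc 1 m, Real.log k := by
  rw [← Finset.Ico_add_one_right_eq_Icc, ← Finset.prod_Ico_id_eq_factorial]
  push_cast
  rw [Real.log_prod]
  intro k hk
  simp only [Finset.mem_Ico] at hk
  exact Nat.cast_ne_zero.mpr (by omega)

lemma key_sum {n : ℕ} (i : Fin n) :
    ((i : ℕ) + 1 : ℝ) * ∑ σ : Equiv.Perm (Fin n), Real.log (linv σ i) =
      (Nat.factorial n : ℝ) * Real.log (Nat.factorial ((i : ℕ) + 1)) := by
  have hswap : ∀ j ∈ Finset.Iic i,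
      (∑ σ : Equiv.Perm (Fin n), Real.log (linv σ i)) =
        ∑ σ : Equiv.Perm (Fin n), Real.log (rnk σ i j) := by
    intro j hj
    have hj' : j ≤ i := Finset.mem_Iic.mp hj
    have := Equiv.sum_comp (Equiv.mulRight (Equiv.swap i j))
      (fun σ : Equiv.Perm (Fin n) => Real.log (linv σ i))
    rw [← this]
    apply Finset.sum_congr rfl
    intro σ _
    simp only [Equiv.coe_mulRight]
    rw [linv_mul_swap σ hj']
  have h1 : ((i : ℕ) + 1 : ℝ) * ∑ σ : Equiv.Perm (Fin n), Real.log (linv σ i) =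
      ∑ j ∈ Finset.Iic i, ∑ σ : Equiv.Perm (Fin n), Real.log (rnk σ i j) := by
    rw [← Finset.sum_congr rfl hswap, Finset.sum_const, Fin.card_Iic, nsmul_eq_mul]
    push_cast
    ring
  rw [h1, Finset.sum_comm]
  have h2 : ∀ σ : Equiv.Perm (Fin n),
      ∑ j ∈ Finset.Iic i, Real.log (rnk σ i j) =
        Real.log (Nat.factorial ((i : ℕ) + 1)) := by
    intro σ
    rw [sum_rnk σ i (fun k => Real.log k), ← log_factorial_eq]
  rw [Finset.sum_congr rfl (fun σ _ => h2 σ), Finset.sum_const, nsmul_eq_mul]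
  congr 1
  simp [Fintype.card_perm, Fintype.card_fin]

/-- Under the uniform distribution on `S_n`, the expected value of `log R(σ)`
is `∑_{i=1}^n log(i!)/i`. -/
theorem stmt_6 (n : ℕ) :
    (∑ σ : Equiv.Perm (Fin n), Real.log (TRN σ)) / (Nat.factorial n : ℝ) =
      ∑ i ∈ Finset.Icc 1 n, Real.log (Nat.factorial i) / (i : ℝ) := by
  have hlog : ∀ σ : Equiv.Perm (Fin n),
      Real.log (TRN σ) = ∑ i : Fin n, Real.log (linv σ i) := by
    intro σ
    rw [TRN]
    push_cast
    rw [Real.log_prod]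
    intro i _
    exact Nat.cast_ne_zero.mpr (linv_pos σ i).ne'
  have hkey : ∀ i : Fin n,
      ∑ σ : Equiv.Perm (Fin n), Real.log (linv σ i) =
        (Nat.factorial n : ℝ) * (Real.log (Nat.factorial ((i : ℕ) + 1)) / ((i : ℕ) + 1)) := by
    intro i
    have h := key_sum i
    have hpos : ((i : ℕ) + 1 : ℝ) ≠ 0 := by positivity
    field_simp
    linarith [h]
  calc (∑ σ : Equiv.Perm (Fin n), Real.log (TRN σ)) / (Nat.factorial n : ℝ)
      = (∑ i : Fin n, ∑ σ : Equiv.Perm (Fin n), Real.log (linv σ i)) /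
          (Nat.factorial n : ℝ) := by
        rw [Finset.sum_congr rfl (fun σ _ => hlog σ), Finset.sum_comm]
    _ = ((Nat.factorial n : ℝ) * ∑ i : Fin n,
          Real.log (Nat.factorial ((i : ℕ) + 1)) / ((i : ℕ) + 1)) /
          (Nat.factorial n : ℝ) := by
        rw [Finset.sum_congr rfl (fun i _ => hkey i), ← Finset.mul_sum]
    _ = ∑ i : Fin n, Real.log (Nat.factorial ((i : ℕ) + 1)) / ((i : ℕ) + 1) := by
        exact mul_div_cancel_left₀ _ (by positivity : (Nat.factorial n : ℝ) ≠ 0)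
    _ = ∑ i ∈ Finset.range n, Real.log (Nat.factorial (i + 1)) / ((i : ℝ) + 1) := by
        rw [Fin.sum_univ_eq_sum_range (fun i => Real.log (Nat.factorial (i + 1)) / ((i : ℝ) + 1))]
    _ = ∑ i ∈ Finset.Icc 1 n, Real.log (Nat.factorial i) / (i : ℝ) := by
        rw [← Finset.Ico_add_one_right_eq_Icc, Finset.sum_Ico_eq_sum_range]
        apply Finset.sum_congr (by norm_num)
        intro i _
        rw [add_comm 1 i]
        push_cast
        ring_nf
end

section
/- For any k ≥ 1 and any natural number m ≥ 0, the sum over σ ∈ S_n of R(σ)^m satisfies the recursion ∑_{σ ∈ S_{k+1}} R(σ)^m = (∑_{a=1}^{k+1} a^m) · ∑_{σ ∈ S_k} R(σ)^m, where R(σ) = ∏_{i} l_i(σ). -/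
open Finset

/-- Build a permutation of `Fin (k+1)` from a value `a` (placed at the last
position) and a permutation `τ` of `Fin k` acting on the rest. -/
def buildPerm {k : ℕ} (a : Fin (k + 1)) (τ : Equiv.Perm (Fin k)) :
    Equiv.Perm (Fin (k + 1)) :=
  ((finSuccEquiv' (Fin.last k)).trans τ.optionCongr).trans (finSuccEquiv' a).symm

lemma buildPerm_last {k : ℕ} (a : Fin (k + 1)) (τ : Equiv.Perm (Fin k)) :
    buildPerm a τ (Fin.last k) = a := by
  simp [buildPerm, finSuccEquiv'_at, finSuccEquiv'_symm_none]

lemma buildPerm_castSucc {k : ℕ} (a : Fin (k + 1)) (τ : Equiv.Perm (Fin k)) (i : Fin k) :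
    buildPerm a τ (Fin.castSucc i) = a.succAbove (τ i) := by
  simp [buildPerm, finSuccEquiv'_last_apply_castSucc, finSuccEquiv'_symm_some]

lemma buildPerm_injective {k : ℕ} :
    Function.Injective (fun p : Fin (k + 1) × Equiv.Perm (Fin k) => buildPerm p.1 p.2) := by
  rintro ⟨a, τ⟩ ⟨b, ρ⟩ h
  simp only at h
  have ha : a = b := by
    have := congrArg (fun σ : Equiv.Perm (Fin (k+1)) => σ (Fin.last k)) h
    simpa [buildPerm_last] using this
  subst ha
  have hτ : τ = ρ := by
    ext i
    have := congrArg (fun σ : Equiv.Perm (Fin (k+1)) => σ (Fin.castSucc i)) h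
    simp only [buildPerm_castSucc] at this
    exact congrArg Fin.val (Fin.succAbove_right_injective this)
  simp [hτ]

lemma buildPerm_bijective {k : ℕ} :
    Function.Bijective (fun p : Fin (k + 1) × Equiv.Perm (Fin k) => buildPerm p.1 p.2) := by
  rw [Fintype.bijective_iff_injective_and_card]
  refine ⟨buildPerm_injective, ?_⟩
  simp [Fintype.card_perm, Nat.factorial_succ]

lemma linv_buildPerm_last {k : ℕ} (a : Fin (k + 1)) (τ : Equiv.Perm (Fin k)) :
    linv (buildPerm a τ) (Fin.last k) = k + 1 - (a : ℕ) := by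
  unfold linv
  rw [buildPerm_last]
  have h1 : (Finset.univ.filter (fun j : Fin (k+1) => j ≤ Fin.last k ∧ a ≤ buildPerm a τ j))
      = Finset.univ.filter (fun j : Fin (k+1) => a ≤ buildPerm a τ j) := by
    apply Finset.filter_congr
    intro j _
    simp [Fin.le_last]
  rw [h1]
  have h2 : (Finset.univ.filter (fun j : Fin (k+1) => a ≤ buildPerm a τ j))
      = (Finset.univ.filter (fun v : Fin (k+1) => a ≤ v)).map
          (buildPerm a τ).symm.toEmbedding := by
    ext j
    simp only [Finset.mem_filter, Finset.mem_map, Finset.mem_univ, true_and,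
      Equiv.coe_toEmbedding]
    constructor
    · intro h; exact ⟨buildPerm a τ j, h, by simp⟩
    · rintro ⟨v, hv, rfl⟩; simpa using hv
  rw [h2, Finset.card_map]
  have : (Finset.univ.filter (fun v : Fin (k+1) => a ≤ v)) = Finset.Ici a := by
    ext v; simp
  rw [this, Fin.card_Ici]

lemma linv_buildPerm_castSucc {k : ℕ} (a : Fin (k + 1)) (τ : Equiv.Perm (Fin k)) (i : Fin k) :
    linv (buildPerm a τ) (Fin.castSucc i) = linv τ i := by
  unfold linv
  have h : (Finset.univ.filter
        (fun j : Fin (k+1) => j ≤ Fin.castSucc i ∧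
          buildPerm a τ (Fin.castSucc i) ≤ buildPerm a τ j))
      = (Finset.univ.filter (fun j : Fin k => j ≤ i ∧ τ i ≤ τ j)).map
          (⟨Fin.castSucc, Fin.castSucc_injective k⟩ : Fin k ↪ Fin (k+1)) := by
    ext j
    simp only [Finset.mem_filter, Finset.mem_map, Finset.mem_univ, true_and,
      Function.Embedding.coeFn_mk]
    constructor
    · rintro ⟨hji, hv⟩
      have hjlt : j < Fin.last k := lt_of_le_of_lt hji (Fin.castSucc_lt_last i)
      obtain ⟨j', rfl⟩ := Fin.exists_castSucc_eq.2 (Fin.ne_last_of_lt hjlt)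
      refine ⟨j', ⟨?_, ?_⟩, rfl⟩
      · exact_mod_cast hji
      · rw [buildPerm_castSucc, buildPerm_castSucc] at hv
        exact (Fin.succAbove_le_succAbove_iff (p := a)).1 hv
    · rintro ⟨j', ⟨hji, hv⟩, rfl⟩
      refine ⟨by exact_mod_cast hji, ?_⟩
      rw [buildPerm_castSucc, buildPerm_castSucc]
      exact (Fin.succAbove_le_succAbove_iff (p := a)).2 hv
  rw [h, Finset.card_map]

lemma TRN_buildPerm {k : ℕ} (a : Fin (k + 1)) (τ : Equiv.Perm (Fin k)) :
    TRN (buildPerm a τ) = (k + 1 - (a : ℕ)) * TRN τ := by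
  unfold TRN
  rw [Fin.prod_univ_castSucc, linv_buildPerm_last, mul_comm]
  congr 1
  exact Finset.prod_congr rfl fun i _ => linv_buildPerm_castSucc a τ i

/-- Recursion for the `m`-th moment sums:
`∑_{σ ∈ S_{k+1}} R(σ)^m = (∑_{a=1}^{k+1} a^m) ∑_{σ ∈ S_k} R(σ)^m`. -/
theorem stmt_9 (k : ℕ) (hk : 1 ≤ k) (m : ℕ) :
    ∑ σ : Equiv.Perm (Fin (k + 1)), (TRN σ) ^ m =
      (∑ a ∈ Finset.Icc 1 (k + 1), a ^ m) * ∑ σ : Equiv.Perm (Fin k), (TRN σ) ^ m := by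
  rw [← Function.Bijective.sum_comp (buildPerm_bijective (k := k))
    (fun σ => (TRN σ) ^ m)]
  rw [Fintype.sum_prod_type]
  have : ∀ a : Fin (k+1), ∀ τ : Equiv.Perm (Fin k),
      TRN (buildPerm a τ) ^ m = (k + 1 - (a : ℕ)) ^ m * TRN τ ^ m := by
    intro a τ; rw [TRN_buildPerm, mul_pow]
  simp only [this, ← Finset.mul_sum]
  rw [← Finset.sum_mul]
  congr 1
  rw [Fin.sum_univ_eq_sum_range (fun a => (k + 1 - a) ^ m)]
  have hI : ∑ a ∈ Finset.Icc 1 (k+1), a ^ m = ∑ j ∈ Finset.range (k+1), (j + 1) ^ m := by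
    rw [← Finset.Ico_add_one_right_eq_Icc, Finset.sum_Ico_eq_sum_range]
    simp [add_comm]
  rw [hI, ← Finset.sum_range_reflect (fun j => (j + 1) ^ m) (k + 1)]
  apply Finset.sum_congr rfl
  intro x hx
  simp only [Finset.mem_range] at hx
  congr 1
  omega
end

section
/- Let σ, σ' ∈ S_n with σ' = τ_i · σ for an adjacent transposition τ_i = (i, i+1), and suppose the Coxeter length of σ' is strictly greater than that of σ. Then R(σ') > R(σ), where R(σ) = ∏_{i=1}^n l_i(σ) is the tree realization number. -/
/-! Left multiplication by `swap a b` with `a ⋖ b` reverses only the comparison between the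
values `a` and `b`. So if `σ⁻¹ a < σ⁻¹ b` it raises `l_{σ⁻¹ b}` by one and fixes every other
`l_j`, and otherwise it lowers `l_{σ⁻¹ a}` by one. Every `σ ≠ 1` admits the second case for
some `a ⋖ b` (else `σ⁻¹` would be strictly monotone), so a greedy reduction shows that `∑ l_j` exceeds the Coxeter length by exactly `n`. Hence the length
increases exactly when `σ⁻¹ a < σ⁻¹ b`, and then `R` gains the factor `(l_q + 1) / l_q` at
`q = σ⁻¹ b`. -/

open Finset

/-- A permutation is an adjacent transposition `(i, i+1)`. -/
def IsAdjTransp {n : ℕ} (τ : Equiv.Perm (Fin n)) : Prop :=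
  ∃ i : ℕ, ∃ h : i + 1 < n, τ = Equiv.swap ⟨i, Nat.lt_of_succ_lt h⟩ ⟨i + 1, h⟩

/-- The Coxeter length: the minimal number of adjacent transpositions whose
product is `σ`. -/
noncomputable def coxLength {n : ℕ} (σ : Equiv.Perm (Fin n)) : ℕ :=
  sInf {k | ∃ l : List (Equiv.Perm (Fin n)),
    l.length = k ∧ (∀ τ ∈ l, IsAdjTransp τ) ∧ l.prod = σ}

open Equiv

section SwapOrder

variable {α : Type*} [LinearOrder α] {a b x y : α}

theorem swap_apply_le_swap_apply_iff (hab : a ⋖ b) (hxy : x = a → y ≠ b)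
    (hyx : x = b → y ≠ a) : swap a b x ≤ swap a b y ↔ x ≤ y := by
  have hlt := hab.lt
  have hc : ∀ c, c ≠ a → c ≠ b → (c ≤ a ↔ c ≤ b) ∧ (a ≤ c ↔ b ≤ c) := fun c ha hb =>
    ⟨⟨fun h => h.trans hlt.le, fun h => hab.le_of_lt (h.lt_of_ne hb)⟩,
      ⟨fun h => hab.ge_of_gt (h.lt_of_ne' ha), fun h => hlt.le.trans h⟩⟩
  rw [swap_apply_def, swap_apply_def]
  split_ifs <;> subst_vars <;> simp_all

end SwapOrder

section LeftInversion

variable {n : ℕ} {a b : Fin n} (σ : Perm (Fin n))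

theorem one_le_linv (i : Fin n) : 1 ≤ linv σ i :=
  Finset.one_le_card.2 ⟨i, by simp⟩

theorem linv_swap_mul (hab : a ⋖ b) (hσ : σ⁻¹ a < σ⁻¹ b) (j : Fin n) :
    linv (swap a b * σ) j = linv σ j + if j = σ⁻¹ b then 1 else 0 := by
  obtain ⟨p, rfl⟩ : ∃ p, σ p = a := σ.surjective a
  obtain ⟨q, rfl⟩ : ∃ q, σ q = b := σ.surjective b
  simp only [Perm.coe_inv, symm_apply_apply] at hσ ⊢
  unfold linv
  split_ifs with hj
  · subst hj
    have hnew : univ.filter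
          (fun k => k ≤ j ∧ (swap (σ p) (σ j) * σ) j ≤ (swap (σ p) (σ j) * σ) k) =
        insert p (univ.filter (fun k => k ≤ j ∧ σ j ≤ σ k)) := by
      ext k
      by_cases hk : k = p
      · subst hk
        simp [hσ.le, hab.lt.le]
      · simp only [mem_filter, mem_univ, true_and, mem_insert, hk, false_or]
        rw [Perm.mul_apply, Perm.mul_apply, swap_apply_le_swap_apply_iff hab]
        · exact fun h => absurd (σ.injective h) hσ.ne'
        · exact fun _ h => hk (σ.injective h)
    have hold : p ∉ univ.filter (fun k => k ≤ j ∧ σ j ≤ σ k) := by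
      simp [hab.lt.not_ge]
    rw [hnew, card_insert_of_notMem hold]
  · rw [add_zero]
    congr 1
    refine filter_congr fun k _ => and_congr_right fun hkj => ?_
    rw [Perm.mul_apply, Perm.mul_apply]
    refine swap_apply_le_swap_apply_iff hab (fun hja hkb => ?_) (fun hjb => ?_)
    · rw [σ.injective hja, σ.injective hkb] at hkj
      exact hkj.not_gt hσ
    · exact absurd (σ.injective hjb) hj

def linvSum (σ : Perm (Fin n)) : ℕ := ∑ i, linv σ i

theorem linvSum_swap_mul (hab : a ⋖ b) (hσ : σ⁻¹ a < σ⁻¹ b) :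
    linvSum (swap a b * σ) = linvSum σ + 1 := by
  simp [linvSum, linv_swap_mul σ hab hσ, sum_add_distrib]

theorem linvSum_swap_mul_of_gt (hab : a ⋖ b) (hσ : σ⁻¹ b < σ⁻¹ a) :
    linvSum σ = linvSum (swap a b * σ) + 1 := by
  have h := linvSum_swap_mul (swap a b * σ) hab (by simpa [mul_inv_rev] using hσ)
  rwa [← mul_assoc, swap_mul_self, one_mul] at h

theorem linvSum_swap_mul_le (hab : a ⋖ b) : linvSum (swap a b * σ) ≤ linvSum σ + 1 := by
  rcases lt_or_gt_of_ne (σ⁻¹.injective.ne hab.lt.ne) with hσ | hσ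
  · exact (linvSum_swap_mul σ hab hσ).le
  · have := linvSum_swap_mul_of_gt σ hab hσ
    omega

theorem linvSum_one : linvSum (1 : Perm (Fin n)) = n := by
  have : ∀ i : Fin n, linv 1 i = 1 := fun i => by
    rw [linv, card_eq_one]
    exact ⟨i, by ext j; rw [mem_filter]; simp [le_antisymm_iff]⟩
  simp [linvSum, this]

theorem TRN_lt_TRN_swap_mul (hab : a ⋖ b) (hσ : σ⁻¹ a < σ⁻¹ b) :
    TRN σ < TRN (swap a b * σ) := by
  refine prod_lt_prod (fun i _ => one_le_linv σ i) (fun i _ => ?_) ⟨σ⁻¹ b, mem_univ _, ?_⟩ <;>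
    simp [linv_swap_mul σ hab hσ]

end LeftInversion

theorem exists_covBy_inv_lt_of_ne_one {α : Type*} [LinearOrder α] [LocallyFiniteOrder α]
    [Finite α] {σ : Perm α} (hσ : σ ≠ 1) : ∃ a b, a ⋖ b ∧ σ⁻¹ b < σ⁻¹ a := by
  by_contra! h
  have hmono : StrictMono ⇑σ⁻¹ := (strictMono_iff_forall_covBy _).2 fun a b hab =>
    (h a b hab).lt_of_ne (σ⁻¹.injective.ne hab.lt.ne)
  exact hσ (inv_eq_one.1 (Perm.ext fun x => congrFun hmono.eq_id x))

section CoxeterLength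

variable {n : ℕ} {a b : Fin n}

theorem isAdjTransp_iff {τ : Perm (Fin n)} :
    IsAdjTransp τ ↔ ∃ a b : Fin n, a ⋖ b ∧ τ = swap a b := by
  simp only [IsAdjTransp, Fin.covBy_iff, Nat.covBy_iff_add_one_eq]
  constructor
  · rintro ⟨i, hi, rfl⟩
    exact ⟨_, _, rfl, rfl⟩
  · rintro ⟨a, b, hab, rfl⟩
    obtain ⟨b, hb⟩ := b
    subst hab
    exact ⟨a, hb, rfl⟩

theorem linvSum_list_prod_le {l : List (Perm (Fin n))} (hl : ∀ τ ∈ l, IsAdjTransp τ) :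
    linvSum l.prod ≤ l.length + n := by
  induction l with
  | nil => simp [linvSum_one]
  | cons τ l ih =>
    obtain ⟨a, b, hab, rfl⟩ := isAdjTransp_iff.1 (hl τ List.mem_cons_self)
    have hstep := linvSum_swap_mul_le l.prod hab
    have hl' := ih fun τ hτ => hl τ (List.mem_cons_of_mem _ hτ)
    simp only [List.prod_cons, List.length_cons]
    omega

theorem exists_list_prod_eq (σ : Perm (Fin n)) :
    ∃ l : List (Perm (Fin n)), (∀ τ ∈ l, IsAdjTransp τ) ∧ l.prod = σ ∧
      l.length + n = linvSum σ := by
  induction hm : linvSum σ using Nat.strong_induction_on generalizing σ with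
  | _ m ih =>
    by_cases hσ : σ = 1
    · subst hσ
      exact ⟨[], by simp, rfl, by simp [← hm, linvSum_one]⟩
    obtain ⟨a, b, hab, hba⟩ := exists_covBy_inv_lt_of_ne_one hσ
    have hsum := linvSum_swap_mul_of_gt σ hab hba
    obtain ⟨l, hl, hprod, hlen⟩ := ih _ (by omega) (swap a b * σ) rfl
    refine ⟨swap a b :: l, List.forall_mem_cons.2 ⟨isAdjTransp_iff.2 ⟨a, b, hab, rfl⟩, hl⟩,
      ?_, ?_⟩
    · rw [List.prod_cons, hprod, ← mul_assoc, swap_mul_self, one_mul]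
    · rw [List.length_cons]
      omega

theorem coxLength_add_eq_linvSum (σ : Perm (Fin n)) : coxLength σ + n = linvSum σ := by
  obtain ⟨l, hl, hprod, hlen⟩ := exists_list_prod_eq σ
  set words := {k | ∃ l : List (Perm (Fin n)),
      l.length = k ∧ (∀ τ ∈ l, IsAdjTransp τ) ∧ l.prod = σ}
  have hmem : l.length ∈ words := ⟨l, rfl, hl, hprod⟩
  obtain ⟨l', hlen', hl', hprod'⟩ : coxLength σ ∈ words := Nat.sInf_mem ⟨_, hmem⟩
  have hle : coxLength σ ≤ l.length := Nat.sInf_le hmem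
  have hge := linvSum_list_prod_le hl'
  rw [hprod', hlen'] at hge
  omega

theorem inv_lt_of_coxLength_lt (σ : Perm (Fin n)) (hab : a ⋖ b)
    (h : coxLength σ < coxLength (swap a b * σ)) : σ⁻¹ a < σ⁻¹ b := by
  by_contra! hσ
  have hsum := linvSum_swap_mul_of_gt σ hab (hσ.lt_of_ne (σ⁻¹.injective.ne hab.lt.ne'))
  have := coxLength_add_eq_linvSum σ
  have := coxLength_add_eq_linvSum (swap a b * σ)
  omega

end CoxeterLength

/-- If `σ' = τ_i σ` for an adjacent transposition `τ_i` and the Coxeter length of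
`σ'` is strictly greater than that of `σ`, then `R(σ') > R(σ)`. -/
theorem stmt_10 (n : ℕ) (σ : Equiv.Perm (Fin n)) (i : ℕ) (h : i + 1 < n)
    (hlen : coxLength σ <
      coxLength (Equiv.swap (⟨i, Nat.lt_of_succ_lt h⟩ : Fin n) ⟨i + 1, h⟩ * σ)) :
    TRN σ < TRN (Equiv.swap (⟨i, Nat.lt_of_succ_lt h⟩ : Fin n) ⟨i + 1, h⟩ * σ) := by
  have hab : (⟨i, Nat.lt_of_succ_lt h⟩ : Fin n) ⋖ ⟨i + 1, h⟩ :=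
    Fin.covBy_iff.2 (Nat.covBy_iff_add_one_eq.2 rfl)
  exact TRN_lt_TRN_swap_mul σ hab (inv_lt_of_coxLength_lt σ hab hlen)
end

section
/- The number of maximal chains in the lattice of set partitions of an (n+1)-element set, ordered by refinement, equals (n+1)! · n! / 2^n. -/
/-!
Every maximal chain of partitions begins by merging two points, so it passes through exactly one
atom of the partition lattice, and the atoms are the `C(n+1, 2)` partitions with a single
two-element block. Above an atom `a` the lattice is the partition lattice of the `n`-element
quotient by `a`, so maximal chains through `a` are maximal chains of that smaller lattice. Hence
`c(n) = C(n+1, 2) c(n-1)` with `c(0) = 1`, i.e. `2^n c(n) = (n+1)! n!`.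
-/

open scoped Nat

section Flag

variable {L : Type*}

lemma isMaxChain_of_forall_comparable [Preorder L] {c : Set L} (hc : IsChain (· ≤ ·) c)
    (h : ∀ x, (∀ y ∈ c, x ≤ y ∨ y ≤ x) → x ∈ c) : IsMaxChain (· ≤ ·) c :=
  ⟨hc, fun _ ht hct => hct.antisymm fun x hx => h x fun _ hy => ht.total hx (hct hy)⟩

lemma Flag.card_eq_one_of_subsingleton [Preorder L] [Subsingleton L] : Nat.card (Flag L) = 1 :=
  have hmax (F : Flag L) : (F : Set L) = Set.univ :=
    F.max_chain' Set.subsingleton_of_subsingleton.isChain (Set.subset_univ _)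
  Nat.card_eq_one_iff_unique.2 ⟨⟨fun F G => Flag.ext ((hmax F).trans (hmax G).symm)⟩, inferInstance⟩

variable [PartialOrder L] [OrderBot L] {a b : L} {F : Flag L}

lemma IsAtom.eq_bot_or_le_of_mem (ha : IsAtom a) (haF : a ∈ F) {x : L} (hx : x ∈ F) :
    x = ⊥ ∨ a ≤ x := by
  rcases F.le_or_le hx haF with h | h
  · exact (ha.le_iff.1 h).imp_right ge_of_eq
  · exact Or.inr h

lemma IsAtom.eq_of_mem (ha : IsAtom a) (hb : IsAtom b) (haF : a ∈ F) (hbF : b ∈ F) : a = b := by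
  rcases F.le_or_le haF hbF with h | h
  · exact (hb.le_iff_eq ha.1).1 h
  · exact ((ha.le_iff_eq hb.1).1 h).symm

lemma Flag.exists_isAtom_mem [OrderTop L] [Nontrivial L] [Finite L] (F : Flag L) :
    ∃ a, IsAtom a ∧ a ∈ F := by
  have hbot : ¬IsMax (⊥ : F) := fun h => by
    obtain ⟨x, hx⟩ := exists_ne (⊥ : L)
    have htop : ((⊤ : F) : L) = ⊥ := congrArg Subtype.val (h.eq_of_le le_top).symm
    exact hx (le_bot_iff.1 (htop ▸ (le_top : x ≤ ((⊤ : F) : L))))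
  obtain ⟨c, hc⟩ := exists_covBy_of_wellFoundedLT hbot
  exact ⟨c, bot_covBy_iff.1 (Flag.coe_covBy_coe.2 hc), c.2⟩

-- Nothing lies strictly between `⊥` and the atom `a`, so a flag through `a` is `⊥` adjoined to a
-- flag of `Set.Ici a`.
def IsAtom.flagEquiv (ha : IsAtom a) : {F : Flag L // a ∈ F} ≃ Flag (Set.Ici a) where
  toFun F := .ofIsMaxChain {x : Set.Ici a | (x : L) ∈ F.1} <| isMaxChain_of_forall_comparable
    (fun x hx y hy _ => F.1.le_or_le hx hy)
    fun x hx => Flag.mem_iff_forall_le_or_ge.2 fun c hc =>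
      (ha.eq_bot_or_le_of_mem F.2 hc).elim (fun h => Or.inr (h ▸ bot_le)) fun hac => hx ⟨c, hac⟩ hc
  invFun C :=
    have haC : a ∈ insert ⊥ (Subtype.val '' (C : Set (Set.Ici a))) :=
      Or.inr ⟨⊥, C.bot_mem, rfl⟩
    ⟨.ofIsMaxChain _ <| isMaxChain_of_forall_comparable
      ((C.chain_le.image_of_map_rel _ _ Subtype.val fun _ _ h => h).insert
        fun _ _ _ => Or.inl bot_le)
      fun x hx => by
        by_cases hx0 : x = ⊥
        · exact hx0 ▸ Set.mem_insert _ _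
        have hax : a ≤ x := by
          rcases hx a haC with h | h
          · exact ((ha.le_iff.1 h).resolve_left hx0).ge
          · exact h
        exact Or.inr ⟨⟨x, hax⟩, Flag.mem_iff_forall_le_or_ge.2 fun y hy =>
          hx y (Or.inr ⟨y, hy, rfl⟩), rfl⟩, haC⟩
  left_inv F := Subtype.ext <| Flag.ext <| Set.ext fun x => by
    refine ⟨?_, fun hx => (ha.eq_bot_or_le_of_mem F.2 hx).imp id fun h => ⟨⟨x, h⟩, hx, rfl⟩⟩
    rintro (rfl | ⟨y, hy, rfl⟩)
    · exact F.1.bot_mem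
    · exact hy
  right_inv C := Flag.ext <| Set.ext fun x => by
    refine ⟨?_, fun hx => Or.inr ⟨x, hx, rfl⟩⟩
    rintro (h | ⟨y, hy, h⟩)
    · exact absurd (le_bot_iff.1 (h ▸ x.2)) ha.1
    · exact Subtype.ext h ▸ hy

variable [OrderTop L] [Nontrivial L] [Finite L]

noncomputable def Flag.atom (F : Flag L) : {a : L // IsAtom a} :=
  ⟨_, F.exists_isAtom_mem.choose_spec.1⟩

lemma Flag.atom_eq_iff {a : {a : L // IsAtom a}} : F.atom = a ↔ a.1 ∈ F :=
  ⟨fun h => h ▸ F.exists_isAtom_mem.choose_spec.2, fun h => Subtype.ext <|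
    F.atom.2.eq_of_mem a.2 F.exists_isAtom_mem.choose_spec.2 h⟩

noncomputable def Flag.equivSigmaAtom : Flag L ≃ Σ a : {a : L // IsAtom a}, Flag (Set.Ici a.1) :=
  (Equiv.sigmaFiberEquiv Flag.atom).symm.trans <| Equiv.sigmaCongrRight fun a =>
    (Equiv.subtypeEquivRight fun _ => Flag.atom_eq_iff).trans a.2.flagEquiv

end Flag

lemma Setoid.exists_rel_ne_of_ne_bot {α : Type*} {r : Setoid α} (hr : r ≠ ⊥) :
    ∃ x y, x ≠ y ∧ r x y := by
  by_contra! h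
  exact hr (le_bot_iff.1 fun x y hxy => by_contra fun hne => h x y hne hxy)

namespace Sym2

variable {α : Type*}

def toSetoid (p : Sym2 α) : Setoid α where
  r x y := x = y ∨ s(x, y) = p
  iseqv := by
    refine ⟨fun _ => Or.inl rfl, fun h => h.imp Eq.symm (Sym2.eq_swap.trans ·), ?_⟩
    rintro x y z (rfl | hxy) (rfl | hyz)
    · exact Or.inl rfl
    · exact Or.inr hyz
    · exact Or.inr hxy
    · rcases Sym2.eq_iff.1 (hxy.trans hyz.symm) with h | h
      · exact Or.inl (h.1.trans h.2)
      · exact Or.inl h.1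

lemma toSetoid_mk_le_iff {r : Setoid α} {x y : α} : toSetoid s(x, y) ≤ r ↔ r x y := by
  refine ⟨fun h => h (Or.inr rfl), fun h u v huv => ?_⟩
  rcases huv with rfl | huv
  · exact r.refl u
  · rcases Sym2.eq_iff.1 huv with ⟨rfl, rfl⟩ | ⟨rfl, rfl⟩
    · exact h
    · exact r.symm h

lemma isAtom_toSetoid {p : Sym2 α} (hp : ¬p.IsDiag) : IsAtom p.toSetoid := by
  induction p using Sym2.ind with | _ x y => ?_
  refine ⟨fun h => hp ?_, fun r hr => ?_⟩
  · have hxy : (⊥ : Setoid α) x y := h ▸ Or.inr rfl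
    rwa [Setoid.bot_def] at hxy
  by_contra hne
  obtain ⟨u, v, huv, hrel⟩ := r.exists_rel_ne_of_ne_bot hne
  have hpair : s(u, v) = s(x, y) := (hr.le hrel).resolve_left huv
  exact hr.not_ge (hpair ▸ toSetoid_mk_le_iff.2 hrel)

lemma eq_of_toSetoid_eq {p q : Sym2 α} (hp : ¬p.IsDiag) (h : p.toSetoid = q.toSetoid) : p = q := by
  induction p using Sym2.ind with | _ x y => ?_
  exact (show q.toSetoid x y from h ▸ Or.inr rfl).resolve_left hp

lemma card_quotient_toSetoid_add_one [Finite α] {p : Sym2 α} (hp : ¬p.IsDiag) :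
    Nat.card (Quotient p.toSetoid) + 1 = Nat.card α := by
  classical
  induction p using Sym2.ind with | _ i j => ?_
  have hij : i ≠ j := hp
  have hbij : Function.Bijective fun x : {x // x ≠ j} => (⟦x.1⟧ : Quotient (toSetoid s(i, j))) := by
    refine ⟨fun x y hxy => Subtype.ext ?_, Quotient.ind fun y => ?_⟩
    · refine (Quotient.exact hxy).resolve_right fun h => ?_
      rcases Sym2.eq_iff.1 h with h | h
      · exact y.2 h.2
      · exact x.2 h.1
    · by_cases hy : y = j
      · subst hy
        exact ⟨⟨i, hij⟩, Quotient.sound (Or.inr rfl)⟩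
      · exact ⟨⟨y, hy⟩, rfl⟩
  rw [← Nat.card_congr (Equiv.ofBijective _ hbij), ← Finite.card_option,
    Nat.card_congr (Equiv.optionSubtypeNe j)]

end Sym2

namespace Setoid

variable {α : Type*}

instance [Finite α] : Finite (Setoid α) :=
  Finite.of_injective _ fun _ _ => eq_iff_rel_eq.2

instance [Nontrivial α] : Nontrivial (Setoid α) :=
  let ⟨_, _, hxy⟩ := exists_pair_ne α
  nontrivial_of_ne _ _ (Sym2.isAtom_toSetoid (Sym2.mk_isDiag_iff.not.2 hxy)).1

noncomputable def atomEquiv : {p : Sym2 α // ¬p.IsDiag} ≃ {r : Setoid α // IsAtom r} :=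
  Equiv.ofBijective (fun p => ⟨p.1.toSetoid, Sym2.isAtom_toSetoid p.2⟩) ⟨
    fun p q h => Subtype.ext (Sym2.eq_of_toSetoid_eq p.2 (congrArg Subtype.val h)),
    fun ⟨r, hr⟩ => by
      obtain ⟨x, y, hxy, hrel⟩ := r.exists_rel_ne_of_ne_bot hr.1
      have hp : ¬(s(x, y)).IsDiag := Sym2.mk_isDiag_iff.not.2 hxy
      exact ⟨⟨_, hp⟩, Subtype.ext <|
        (hr.le_iff_eq (Sym2.isAtom_toSetoid hp).1).1 (Sym2.toSetoid_mk_le_iff.2 hrel)⟩⟩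

lemma two_mul_card_atoms [Finite α] :
    2 * Nat.card {r : Setoid α // IsAtom r} = Nat.card α * (Nat.card α - 1) := by
  rw [← Nat.card_congr atomEquiv, Sym2.natCard_subtype_not_diag, Nat.choose_two_right,
    Nat.mul_div_cancel' (Nat.even_mul_pred_self _).two_dvd]

lemma card_quotient_add_one_of_isAtom [Finite α] {r : Setoid α} (hr : IsAtom r) :
    Nat.card (Quotient r) + 1 = Nat.card α := by
  obtain ⟨⟨p, hp⟩, hpr⟩ := atomEquiv.surjective ⟨r, hr⟩
  obtain rfl : p.toSetoid = r := congrArg Subtype.val hpr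
  exact Sym2.card_quotient_toSetoid_add_one hp

theorem two_pow_mul_card_flag [Finite α] {n : ℕ} (hα : Nat.card α = n + 1) :
    2 ^ n * Nat.card (Flag (Setoid α)) = (n + 1)! * n ! := by
  induction n generalizing α with
  | zero =>
    have : Subsingleton α := (Nat.card_eq_one_iff_unique.1 hα).1
    have : Subsingleton (Setoid α) := ⟨fun r s => Setoid.ext fun x y => by
      rw [Subsingleton.elim x y]; exact iff_of_true (r.refl y) (s.refl y)⟩
    simp [Flag.card_eq_one_of_subsingleton]
  | succ n ih =>
    have : Nontrivial α := Finite.one_lt_card_iff_nontrivial.1 (by omega)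
    have : Fintype {r : Setoid α // IsAtom r} := Fintype.ofFinite _
    have hfiber (a : {r : Setoid α // IsAtom r}) :
        2 ^ n * Nat.card (Flag (Set.Ici a.1)) = (n + 1)! * n ! := by
      rw [Nat.card_congr (show Flag (Set.Ici a.1) ≃ Flag (Setoid (Quotient a.1)) from
        Flag.map (correspondence a.1))]
      exact ih (by have := card_quotient_add_one_of_isAtom a.2; omega)
    calc 2 ^ (n + 1) * Nat.card (Flag (Setoid α))
        = 2 * ∑ a : {r : Setoid α // IsAtom r}, 2 ^ n * Nat.card (Flag (Set.Ici a.1)) := by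
          rw [Nat.card_congr Flag.equivSigmaAtom, Nat.card_sigma, ← Finset.mul_sum, pow_succ',
            mul_assoc]
      _ = 2 * Nat.card {r : Setoid α // IsAtom r} * ((n + 1)! * n !) := by
          simp only [hfiber, Finset.sum_const, Finset.card_univ, smul_eq_mul,
            Nat.card_eq_fintype_card, mul_assoc]
      _ = (n + 2)! * (n + 1)! := by
          rw [two_mul_card_atoms, hα, Nat.add_sub_cancel, Nat.factorial_succ (n + 1),
            Nat.factorial_succ n]
          ring

end Setoid

/-- The number of maximal chains (flags) in the lattice of set partitions of an
`(n+1)`-element set, ordered by refinement (partitions are encoded as setoids,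
i.e. equivalence relations), equals `(n+1)! n! / 2^n`. -/
theorem stmt_12 (n : ℕ) :
    2 ^ n * Nat.card (Flag (Setoid (Fin (n + 1)))) =
      Nat.factorial (n + 1) * Nat.factorial n :=
  Setoid.two_pow_mul_card_flag (Nat.card_fin _)
end
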